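/- arXiv:1202.6545 — 3 statements merged into one kernel-verified Lean document; each statement's English description precedes it below -/
import Mathlib

section
/- In a hidden Markov tree model, the global conditional entropy of the state tree given the observations is bounded above by the sum over all vertices of the entropies of each state conditioned on its children states: H(S | X = x) ≤ Σ_{u∈U} H(S_u | S_{c(u)}, X = x), where the term for a leaf vertex u is H(S_u | X = x). -/
/-- A hidden Markov tree (HMT) model on a finite rooted tree with `n` vertices:
the root is `0` and the vertices are indexed in a topological order, i.e. every
non-root vertex has a parent with strictly smaller index.  The model has `J`
states and observation alphabet `{0, …, V-1}`, with initial probabilities (for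
the root), transition probabilities and emission probabilities. -/
structure HMTModel (J V n : ℕ) [NeZero n] where
  parent : Fin n → Fin n
  parent_lt : ∀ u : Fin n, u ≠ 0 → parent u < u
  init : Fin J → ℝ
  trans : Fin J → Fin J → ℝ
  emit : Fin J → Fin V → ℝ
  init_nonneg : ∀ j, 0 ≤ init j
  init_sum : ∑ j, init j = 1
  trans_nonneg : ∀ i j, 0 ≤ trans i j
  trans_sum : ∀ i, ∑ j, trans i j = 1
  emit_nonneg : ∀ j y, 0 ≤ emit j y
  emit_sum : ∀ j, ∑ y, emit j y = 1

namespace HMTModel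

variable {J V n : ℕ} [NeZero J] [NeZero n]

/-- The joint law of the state tree and the observed tree:
`P(S = s, X = x) = π_{s_0} (∏_{u ≠ 0} p_{s_{ρ(u)} s_u}) ∏_u b_{s_u}(x_u)`. -/
noncomputable def joint (M : HMTModel J V n) (s : Fin n → Fin J) (x : Fin n → Fin V) : ℝ :=
  M.init (s 0) *
    (∏ u ∈ Finset.univ.filter (fun u : Fin n => u ≠ 0), M.trans (s (M.parent u)) (s u)) *
    ∏ u : Fin n, M.emit (s u) (x u)

open Classical in
/-- Probability of an event on (state tree, observed tree). -/
noncomputable def pr (M : HMTModel J V n)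
    (E : (Fin n → Fin J) → (Fin n → Fin V) → Prop) : ℝ :=
  ∑ s : Fin n → Fin J, ∑ y : Fin n → Fin V, if E s y then M.joint s y else 0

/-- Conditional probability `P(A | B)`; it is `0` when the conditioning event
has probability zero. -/
noncomputable def cpr (M : HMTModel J V n)
    (A B : (Fin n → Fin J) → (Fin n → Fin V) → Prop) : ℝ :=
  if 0 < M.pr B then M.pr (fun s y => A s y ∧ B s y) / M.pr B else 0

/-- Entropy of the random vector `f(S)` given the event `E`
(natural logarithm, with the convention `0 log 0 = 0`). -/
noncomputable def condEnt (M : HMTModel J V n) {α : Type*} [Fintype α]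
    (f : (Fin n → Fin J) → α)
    (E : (Fin n → Fin J) → (Fin n → Fin V) → Prop) : ℝ :=
  -∑ a : α, M.cpr (fun s _ => f s = a) E * Real.log (M.cpr (fun s _ => f s = a) E)

/-- Entropy of `f(S)` given the random vector `g(S)` and the event `E`:
`H(f(S) | g(S), E) = ∑_c P(g(S) = c | E) H(f(S) | g(S) = c, E)`. -/
noncomputable def condEntGiven (M : HMTModel J V n) {α β : Type*} [Fintype α] [Fintype β]
    (f : (Fin n → Fin J) → α) (g : (Fin n → Fin J) → β)
    (E : (Fin n → Fin J) → (Fin n → Fin V) → Prop) : ℝ :=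
  ∑ c : β, M.cpr (fun s _ => g s = c) E * M.condEnt f (fun s y => g s = c ∧ E s y)

/-- The event `X = x`. -/
def obsEq (x : Fin n → Fin V) : (Fin n → Fin J) → (Fin n → Fin V) → Prop :=
  fun _ y => y = x

/-- `v` belongs to the complete subtree rooted at `u` (i.e. `u` is obtained
from `v` by repeatedly taking parents). -/
def inSubtree (M : HMTModel J V n) (u v : Fin n) : Prop :=
  Relation.ReflTransGen (fun a b : Fin n => a ≠ 0 ∧ M.parent a = b) v u

open Classical in
/-- The state subtree `S̄_u` rooted at `u` (coordinates outside the subtree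
are padded by `0`). -/
noncomputable def subVar (M : HMTModel J V n) (u : Fin n) (s : Fin n → Fin J) :
    Fin n → Fin J :=
  fun v => if M.inSubtree u v then s v else 0

open Classical in
/-- The collection `S̄_{c(u)}` of state subtrees rooted at the children of `u`
(all other coordinates padded by `0`). -/
noncomputable def childSubVar (M : HMTModel J V n) (u : Fin n) (s : Fin n → Fin J) :
    Fin n → Fin J :=
  fun v => if M.inSubtree u v ∧ v ≠ u then s v else 0

/-- The states `S_{c(u)}` of the children of `u` (all other coordinates padded
by `0`). -/
def childVar (M : HMTModel J V n) (u : Fin n) (s : Fin n → Fin J) :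
    Fin n → Fin J :=
  fun v => if v ≠ 0 ∧ M.parent v = u then s v else 0

/-- The states `(S_v)_{v ∈ Vs}` of a subset `Vs` of vertices (all other
coordinates padded by `0`). -/
def memVar (_M : HMTModel J V n) (Vs : Finset (Fin n)) (s : Fin n → Fin J) :
    Fin n → Fin J :=
  fun v => if v ∈ Vs then s v else 0

end HMTModel

open HMTModel


/-! Enumerating the vertices in the topological order, the chain rule gives
`H(S | X = x) = ∑_u H(S_u | S_{>u}, X = x)`, where `S_{>u}` are the states of the vertices of
larger index. The children of `u` all have larger index than `u`, so `S_{c(u)}` is a function of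
`S_{>u}`, and conditioning on a function of a variable can only increase the entropy: by the
log-sum inequality (Jensen for the concave `t ↦ -t log t`) on each fibre of that function.
At a leaf, `S_{c(u)}` is constant. -/

open Real Finset

namespace Real

lemma negMulLog_div_self (x : ℝ) : negMulLog (x / x) = 0 := by
  rcases eq_or_ne x 0 with rfl | hx <;> simp [*]

/-- The log-sum inequality. -/
lemma sum_mul_negMulLog_div_le {ι : Type*} (t : Finset ι) {x y : ι → ℝ}
    (hx : ∀ i ∈ t, 0 ≤ x i) (hxy : ∀ i ∈ t, x i ≤ y i) :
    ∑ i ∈ t, y i * negMulLog (x i / y i) ≤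
      (∑ i ∈ t, y i) * negMulLog ((∑ i ∈ t, x i) / ∑ i ∈ t, y i) := by
  set Y := ∑ i ∈ t, y i
  have hy : ∀ i ∈ t, 0 ≤ y i := fun i hi => (hx i hi).trans (hxy i hi)
  rcases (sum_nonneg hy).eq_or_lt with hY | hY
  · have hy0 : ∀ i ∈ t, y i = 0 := (sum_eq_zero_iff_of_nonneg hy).1 hY.symm
    rw [show Y = 0 from hY.symm, zero_mul, sum_eq_zero fun i hi => by rw [hy0 i hi, zero_mul]]
  have hmul : ∀ i ∈ t, y i * (x i / y i) = x i := fun i hi => by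
    rcases (hy i hi).eq_or_lt with h | h
    · simp [← h, le_antisymm (h ▸ hxy i hi) (hx i hi)]
    · field_simp
  have jensen := concaveOn_negMulLog.le_map_sum (t := t) (w := fun i => y i / Y)
    (p := fun i => x i / y i) (fun i hi => div_nonneg (hy i hi) hY.le)
    (by rw [← sum_div, div_self hY.ne'])
    (fun i hi => Set.mem_Ici.2 (div_nonneg (hx i hi) (hy i hi)))
  have hmean : ∑ i ∈ t, (y i / Y) • (x i / y i) = (∑ i ∈ t, x i) / Y := by
    rw [sum_div]
    refine sum_congr rfl fun i hi => ?_
    rw [smul_eq_mul, div_mul_eq_mul_div, hmul i hi]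
  calc ∑ i ∈ t, y i * negMulLog (x i / y i)
      = Y * ∑ i ∈ t, (y i / Y) • negMulLog (x i / y i) := by
        rw [mul_sum]
        refine sum_congr rfl fun i _ => ?_
        rw [smul_eq_mul, div_mul_eq_mul_div, mul_div_cancel₀ _ hY.ne']
    _ ≤ Y * negMulLog ((∑ i ∈ t, x i) / Y) := by
        rw [← hmean]
        exact mul_le_mul_of_nonneg_left jensen hY.le

end Real

lemma Function.injective_eval_update {ι α : Type*} [DecidableEq ι] (i : ι) (a : α) :
    Function.Injective fun t : ι → α => (t i, Function.update t i a) := by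
  intro t t' h
  simp only [Prod.mk.injEq] at h
  funext v
  by_cases hv : v = i
  · subst hv
    exact h.1
  · simpa [Function.update_of_ne hv] using congrFun h.2 v

namespace DiscreteEntropy

variable {Ω α β γ : Type*} [Fintype Ω]

open Classical in
noncomputable def mass (w : Ω → ℝ) (B : Ω → Prop) : ℝ :=
  ∑ ω, if B ω then w ω else 0

/-- Division by zero makes this `0` when `B` has mass zero, the convention of `HMTModel.cpr`. -/
noncomputable def condProb (w : Ω → ℝ) (A B : Ω → Prop) : ℝ :=
  mass w (fun ω => A ω ∧ B ω) / mass w B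

noncomputable def entropy [Fintype α] (w : Ω → ℝ) (f : Ω → α) (B : Ω → Prop) : ℝ :=
  ∑ a, negMulLog (condProb w (fun ω => f ω = a) B)

noncomputable def condEntropy [Fintype α] [Fintype β]
    (w : Ω → ℝ) (f : Ω → α) (g : Ω → β) (B : Ω → Prop) : ℝ :=
  ∑ c, condProb w (fun ω => g ω = c) B * entropy w f (fun ω => g ω = c ∧ B ω)

variable {w : Ω → ℝ} {A B : Ω → Prop}

lemma mass_nonneg (hw : ∀ ω, 0 ≤ w ω) (B : Ω → Prop) : 0 ≤ mass w B := by
  classical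
  exact sum_nonneg fun ω _ => by split_ifs <;> simp [hw ω]

lemma mass_mono (hw : ∀ ω, 0 ≤ w ω) (h : ∀ ω, A ω → B ω) : mass w A ≤ mass w B := by
  classical
  refine sum_le_sum fun ω _ => ?_
  split_ifs with hA hB hB <;> first | exact le_rfl | exact hw ω | exact absurd (h ω hA) hB

lemma mass_false : mass w (fun _ => False) = 0 := by
  simp [mass]

lemma sum_mass_preimage [Fintype α] (f : Ω → α) (B : Ω → Prop) :
    ∑ a, mass w (fun ω => f ω = a ∧ B ω) = mass w B := by
  classical
  unfold mass
  rw [sum_comm]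
  refine sum_congr rfl fun ω _ => ?_
  by_cases hB : B ω <;> simp [hB]

lemma sum_mass_preimage_fiber [Fintype β] [DecidableEq γ] (g : Ω → β) (h : β → γ) (c : γ)
    (B : Ω → Prop) :
    ∑ b ∈ univ.filter (fun b => h b = c), mass w (fun ω => g ω = b ∧ B ω) =
      mass w (fun ω => h (g ω) = c ∧ B ω) := by
  classical
  unfold mass
  rw [sum_comm]
  refine sum_congr rfl fun ω _ => ?_
  by_cases hB : B ω <;> simp [hB, sum_ite_eq]

lemma sum_condProb [Fintype α] (f : Ω → α) (hB : mass w B ≠ 0) :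
    ∑ a, condProb w (fun ω => f ω = a) B = 1 := by
  simp only [condProb]
  rw [← sum_div, sum_mass_preimage, div_self hB]

lemma condProb_pair (hw : ∀ ω, 0 ≤ w ω) (f : Ω → α) (g : Ω → β) (a : α) (c : β) :
    condProb w (fun ω => (f ω, g ω) = (a, c)) B =
      condProb w (fun ω => g ω = c) B *
        condProb w (fun ω => f ω = a) (fun ω => g ω = c ∧ B ω) := by
  have hpair : mass w (fun ω => (f ω, g ω) = (a, c) ∧ B ω) =
      mass w (fun ω => f ω = a ∧ g ω = c ∧ B ω) := by
    simp only [Prod.mk.injEq, and_assoc]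
  unfold condProb
  rw [hpair]
  by_cases hc : mass w (fun ω => g ω = c ∧ B ω) = 0
  · have hac : mass w (fun ω => f ω = a ∧ g ω = c ∧ B ω) = 0 :=
      le_antisymm (hc ▸ mass_mono hw fun ω h => h.2) (mass_nonneg hw _)
    simp [hc, hac]
  · rw [div_mul_div_cancel₀' hc]

lemma entropy_of_mass_eq_zero [Fintype α] (f : Ω → α) (hB : mass w B = 0) :
    entropy w f B = 0 := by
  simp [entropy, condProb, hB]

lemma entropy_const [Fintype α] (a₀ : α) (B : Ω → Prop) :
    entropy w (fun _ => a₀) B = 0 := by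
  classical
  refine Fintype.sum_eq_zero _ fun a => ?_
  by_cases ha : a₀ = a
  · simp [condProb, ha, negMulLog_div_self]
  · simp [condProb, ha, mass_false]

lemma entropy_comp_of_injective [Fintype α] [Fintype β] {e : α → β} (he : e.Injective)
    (f : Ω → α) (B : Ω → Prop) :
    entropy w (fun ω => e (f ω)) B = entropy w f B := by
  refine (Fintype.sum_of_injective e he _ _ (fun b hb => ?_) (fun a => ?_)).symm
  · have hne : ∀ ω, e (f ω) ≠ b := fun ω h => hb ⟨f ω, h⟩
    simp [condProb, hne, mass_false]
  · simp [condProb, he.eq_iff]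

lemma entropy_pair [Fintype α] [Fintype β] (hw : ∀ ω, 0 ≤ w ω)
    (f : Ω → α) (g : Ω → β) (B : Ω → Prop) :
    entropy w (fun ω => (f ω, g ω)) B = entropy w g B + condEntropy w f g B := by
  unfold condEntropy entropy
  rw [Fintype.sum_prod_type_right, ← sum_add_distrib]
  refine sum_congr rfl fun c _ => ?_
  simp only [condProb_pair hw, negMulLog_mul]
  rw [sum_add_distrib, ← sum_mul, ← mul_sum]
  by_cases hc : mass w (fun ω => g ω = c ∧ B ω) = 0
  · simp [condProb, hc]
  · rw [sum_condProb f hc, one_mul]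

lemma condEntropy_const [Fintype α] [Fintype β] (f : Ω → α) (c₀ : β) (B : Ω → Prop) :
    condEntropy w f (fun _ => c₀) B = entropy w f B := by
  classical
  rw [condEntropy,
    Fintype.sum_eq_single c₀ fun c hc => by simp [condProb, Ne.symm hc, mass_false]]
  by_cases hB : mass w B = 0
  · simp [entropy_of_mass_eq_zero f hB]
  · simp [condProb, hB]

lemma condEntropy_eq_inv_mul_sum [Fintype α] [Fintype β] (f : Ω → α) (g : Ω → β)
    (B : Ω → Prop) :
    condEntropy w f g B = (mass w B)⁻¹ * ∑ a, ∑ c, mass w (fun ω => g ω = c ∧ B ω) *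
      negMulLog (mass w (fun ω => g ω = c ∧ f ω = a ∧ B ω) /
        mass w (fun ω => g ω = c ∧ B ω)) := by
  simp only [condEntropy, entropy, condProb, and_left_comm (a := f _ = _), mul_sum]
  rw [sum_comm]
  refine sum_congr rfl fun a _ => sum_congr rfl fun c _ => ?_
  ring

lemma condEntropy_le_comp [Fintype α] [Fintype β] [Fintype γ] [DecidableEq γ]
    (hw : ∀ ω, 0 ≤ w ω) (f : Ω → α) (g : Ω → β) (h : β → γ) (B : Ω → Prop) :
    condEntropy w f g B ≤ condEntropy w f (fun ω => h (g ω)) B := by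
  rw [condEntropy_eq_inv_mul_sum, condEntropy_eq_inv_mul_sum]
  refine mul_le_mul_of_nonneg_left (sum_le_sum fun a _ => ?_) (inv_nonneg.2 (mass_nonneg hw B))
  rw [← sum_fiberwise univ h]
  refine sum_le_sum fun c _ => ?_
  have hlogSum := sum_mul_negMulLog_div_le (univ.filter fun b => h b = c)
    (x := fun b => mass w fun ω => g ω = b ∧ f ω = a ∧ B ω)
    (y := fun b => mass w fun ω => g ω = b ∧ B ω) (fun _ _ => mass_nonneg hw _)
    (fun _ _ => mass_mono hw fun ω hω => ⟨hω.1, hω.2.2⟩)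
  rwa [sum_mass_preimage_fiber, sum_mass_preimage_fiber] at hlogSum

section Suffix

variable {n : ℕ} [Zero α]

def suffix (k : ℕ) (s : Fin n → α) : Fin n → α :=
  fun v => if k ≤ (v : ℕ) then s v else 0

lemma suffix_zero (s : Fin n → α) : suffix 0 s = s :=
  funext fun _ => if_pos (Nat.zero_le _)

lemma suffix_of_le {k : ℕ} (hk : n ≤ k) (s : Fin n → α) : suffix k s = 0 :=
  funext fun v => if_neg (by omega)

lemma suffix_split {k : ℕ} (hk : k < n) (s : Fin n → α) :
    (suffix k s ⟨k, hk⟩, Function.update (suffix k s) ⟨k, hk⟩ 0) =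
      (s ⟨k, hk⟩, suffix (k + 1) s) := by
  refine Prod.ext (if_pos le_rfl) (funext fun v => ?_)
  by_cases hv : v = ⟨k, hk⟩
  · subst hv
    simp [suffix]
  · have hvk : (v : ℕ) ≠ k := fun h => hv (Fin.ext h)
    simp only [Function.update_of_ne hv, suffix]
    congr 1
    exact propext (by omega)

variable [Fintype α]

lemma entropy_suffix (hw : ∀ ω, 0 ≤ w ω) (S : Ω → Fin n → α) (B : Ω → Prop)
    {k : ℕ} (hk : k ≤ n) :
    entropy w (fun ω => suffix k (S ω)) B =
      ∑ u ∈ univ.filter (fun u : Fin n => k ≤ (u : ℕ)),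
        condEntropy w (fun ω => S ω u) (fun ω => suffix (u + 1) (S ω)) B := by
  induction hk using Nat.decreasingInduction with
  | self =>
    rw [filter_false_of_mem fun u _ => by omega, sum_empty]
    simp only [suffix_of_le le_rfl]
    exact entropy_const 0 B
  | of_succ k hk ih =>
    have hsplit := entropy_comp_of_injective (w := w)
      (Function.injective_eval_update (⟨k, hk⟩ : Fin n) (0 : α)) (fun ω => suffix k (S ω)) B
    simp only [suffix_split hk] at hsplit
    have hfilter : univ.filter (fun u : Fin n => k ≤ (u : ℕ)) =
        insert ⟨k, hk⟩ (univ.filter fun u : Fin n => k + 1 ≤ (u : ℕ)) := by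
      ext u
      simp only [mem_filter, mem_univ, true_and, mem_insert, Fin.ext_iff]
      omega
    rw [← hsplit, entropy_pair hw, ih, hfilter, sum_insert (by simp), add_comm]

lemma entropy_eq_sum_condEntropy_suffix (hw : ∀ ω, 0 ≤ w ω) (S : Ω → Fin n → α)
    (B : Ω → Prop) :
    entropy w S B =
      ∑ u, condEntropy w (fun ω => S ω u) (fun ω => suffix (u + 1) (S ω)) B := by
  simpa [suffix_zero] using entropy_suffix hw S B (Nat.zero_le n)

end Suffix

end DiscreteEntropy

namespace HMTModel

open DiscreteEntropy

variable {J V n : ℕ} [NeZero n] (M : HMTModel J V n)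

noncomputable def weight (p : (Fin n → Fin J) × (Fin n → Fin V)) : ℝ := M.joint p.1 p.2

lemma weight_nonneg (p : (Fin n → Fin J) × (Fin n → Fin V)) : 0 ≤ M.weight p :=
  mul_nonneg (mul_nonneg (M.init_nonneg _) (prod_nonneg fun _ _ => M.trans_nonneg _ _))
    (prod_nonneg fun _ _ => M.emit_nonneg _ _)

lemma pr_eq_mass (E : (Fin n → Fin J) → (Fin n → Fin V) → Prop) :
    M.pr E = mass M.weight (fun p => E p.1 p.2) := by
  rw [pr, mass, Fintype.sum_prod_type]
  rfl

lemma cpr_eq_condProb (A E : (Fin n → Fin J) → (Fin n → Fin V) → Prop) :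
    M.cpr A E = condProb M.weight (fun p => A p.1 p.2) (fun p => E p.1 p.2) := by
  rw [cpr, condProb, pr_eq_mass, pr_eq_mass]
  split_ifs with hE
  · rfl
  · rw [le_antisymm (not_lt.1 hE) (mass_nonneg M.weight_nonneg _), div_zero]

lemma condEnt_eq_entropy {α : Type*} [Fintype α] (f : (Fin n → Fin J) → α)
    (E : (Fin n → Fin J) → (Fin n → Fin V) → Prop) :
    M.condEnt f E = entropy M.weight (fun p => f p.1) (fun p => E p.1 p.2) := by
  simp only [condEnt, entropy, cpr_eq_condProb, negMulLog, neg_mul, sum_neg_distrib]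

lemma condEntGiven_eq_condEntropy {α β : Type*} [Fintype α] [Fintype β]
    (f : (Fin n → Fin J) → α) (g : (Fin n → Fin J) → β)
    (E : (Fin n → Fin J) → (Fin n → Fin V) → Prop) :
    M.condEntGiven f g E =
      condEntropy M.weight (fun p => f p.1) (fun p => g p.1) (fun p => E p.1 p.2) := by
  simp only [condEntGiven, condEntropy, cpr_eq_condProb, condEnt_eq_entropy]

variable [NeZero J]

lemma childVar_suffix (u : Fin n) (s : Fin n → Fin J) :
    M.childVar u (suffix (u + 1) s) = M.childVar u s := by
  funext v
  by_cases hv : v ≠ 0 ∧ M.parent v = u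
  · have hlt : (u : ℕ) < v := hv.2 ▸ M.parent_lt v hv.1
    simp [childVar, suffix, hv, Nat.succ_le_of_lt hlt]
  · simp [childVar, hv]

lemma condEntropy_suffix_le_condEntGiven (u : Fin n)
    (E : (Fin n → Fin J) → (Fin n → Fin V) → Prop) :
    condEntropy M.weight (fun p => p.1 u) (fun p => suffix (u + 1) p.1) (fun p => E p.1 p.2) ≤
      M.condEntGiven (fun s => s u) (M.childVar u) E := by
  refine (condEntropy_le_comp M.weight_nonneg _ _ (M.childVar u) _).trans_eq ?_
  simp only [M.childVar_suffix, condEntGiven_eq_condEntropy]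

lemma condEntGiven_childVar_of_isLeaf {u : Fin n}
    (hu : univ.filter (fun v : Fin n => v ≠ 0 ∧ M.parent v = u) = ∅)
    (E : (Fin n → Fin J) → (Fin n → Fin V) → Prop) :
    M.condEntGiven (fun s => s u) (M.childVar u) E = M.condEnt (fun s => s u) E := by
  have hconst : M.childVar u = fun _ => 0 :=
    funext fun _ => funext fun v => if_neg fun hv => filter_eq_empty_iff.1 hu (mem_univ v) hv
  rw [hconst, condEntGiven_eq_condEntropy, condEntropy_const, condEnt_eq_entropy]

end HMTModel

theorem hmt_entropy_children_upper_bound_general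
    {J V n : ℕ} [NeZero J] [NeZero n] (M : HMTModel J V n)
    (x : Fin n → Fin V) :
    M.condEnt (fun s => s) (obsEq x)
      ≤ ∑ u : Fin n,
          if Finset.univ.filter (fun v : Fin n => v ≠ 0 ∧ M.parent v = u) = ∅
          then M.condEnt (fun s => s u) (obsEq x)
          else M.condEntGiven (fun s => s u) (M.childVar u) (obsEq x) := by
  rw [M.condEnt_eq_entropy, DiscreteEntropy.entropy_eq_sum_condEntropy_suffix M.weight_nonneg]
  refine sum_le_sum fun u _ => (M.condEntropy_suffix_le_condEntGiven u _).trans_eq ?_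
  split_ifs with hleaf
  · exact M.condEntGiven_childVar_of_isLeaf hleaf _
  · rfl

/-- In a hidden Markov tree model, the global conditional entropy
of the state tree given the observations is bounded above by the sum over all
vertices of the entropies of each state conditioned on its children states:
`H(S | X = x) ≤ ∑_{u∈U} H(S_u | S_{c(u)}, X = x)`, where the term for a leaf
vertex `u` is `H(S_u | X = x)`. -/
theorem hmt_entropy_children_upper_bound
    {J V n : ℕ} [NeZero J] [NeZero n] (M : HMTModel J V n)
    (x : Fin n → Fin V) (hx : 0 < M.pr (obsEq x)) :
    M.condEnt (fun s => s) (obsEq x)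
      ≤ ∑ u : Fin n,
          if Finset.univ.filter (fun v : Fin n => v ≠ 0 ∧ M.parent v = u) = ∅
          then M.condEnt (fun s => s u) (obsEq x)
          else M.condEntGiven (fun s => s u) (M.childVar u) (obsEq x) :=
  hmt_entropy_children_upper_bound_general M x
end

section
/- In a hidden Markov chain model, the conditional entropy of the state sequence given the observed sequence decomposes additively as a sum of entropies conditioned on the future state: H(S | X = x) = Σ_{t=0}^{T−2} H(S_t | S_{t+1}, X = x) + H(S_{T−1} | X = x). -/
/-!
Given `X = x`, the posterior weight of a state path `s` is a chain of factors
`π_{s_0} b_{s_0}(x_0) ∏_t p_{s_{t-1} s_t} b_{s_t}(x_t)`, each linking two consecutive states.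
Peeling off the first state, the chain rule gives `H(S) = H(S_1^{T-1}) + H(S_0 | S_1^{T-1})`.
Summing out `S_0` leaves a chain weight of the same shape on `S_1^{T-1}`, and since `S_0` enters the
weight only through its factor with `S_1`, its conditional law given the whole future depends on
`S_1` alone, so `H(S_0 | S_1^{T-1}) = H(S_0 | S_1)`. Induction on `T` finishes the proof.
-/

/-- A hidden Markov chain (HMC) model with `J` states, observation alphabet
`{0, …, V-1}` and sequence length `T`: initial probabilities, transition
probabilities and emission probabilities. -/
structure HMCModel (J V T : ℕ) where
  init : Fin J → ℝ
  trans : Fin J → Fin J → ℝ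
  emit : Fin J → Fin V → ℝ
  init_nonneg : ∀ j, 0 ≤ init j
  init_sum : ∑ j, init j = 1
  trans_nonneg : ∀ i j, 0 ≤ trans i j
  trans_sum : ∀ i, ∑ j, trans i j = 1
  emit_nonneg : ∀ j y, 0 ≤ emit j y
  emit_sum : ∀ j, ∑ y, emit j y = 1

namespace HMCModel

variable {J V T : ℕ} [NeZero J] [NeZero T]

/-- The joint law of the state sequence and the observed sequence:
`P(S = s, X = x) = π_{s_0} b_{s_0}(x_0) ∏_{t=1}^{T-1} p_{s_{t-1} s_t} b_{s_t}(x_t)`. -/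
noncomputable def joint (M : HMCModel J V T) (s : Fin T → Fin J) (x : Fin T → Fin V) : ℝ :=
  M.init (s 0) * M.emit (s 0) (x 0) *
    ∏ t ∈ Finset.univ.filter (fun t : Fin T => t ≠ 0),
      M.trans (s (t - 1)) (s t) * M.emit (s t) (x t)

open Classical in
/-- Probability of an event on (state sequence, observed sequence). -/
noncomputable def pr (M : HMCModel J V T)
    (E : (Fin T → Fin J) → (Fin T → Fin V) → Prop) : ℝ :=
  ∑ s : Fin T → Fin J, ∑ y : Fin T → Fin V, if E s y then M.joint s y else 0

/-- Conditional probability `P(A | B)`; it is `0` when the conditioning event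
has probability zero. -/
noncomputable def cpr (M : HMCModel J V T)
    (A B : (Fin T → Fin J) → (Fin T → Fin V) → Prop) : ℝ :=
  if 0 < M.pr B then M.pr (fun s y => A s y ∧ B s y) / M.pr B else 0

/-- Entropy of the random vector `f(S)` given the event `E`
(natural logarithm, with the convention `0 log 0 = 0`). -/
noncomputable def condEnt (M : HMCModel J V T) {α : Type*} [Fintype α]
    (f : (Fin T → Fin J) → α)
    (E : (Fin T → Fin J) → (Fin T → Fin V) → Prop) : ℝ :=
  -∑ a : α, M.cpr (fun s _ => f s = a) E * Real.log (M.cpr (fun s _ => f s = a) E)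

/-- Entropy of `f(S)` given the random vector `g(S)` and the event `E`:
`H(f(S) | g(S), E) = ∑_c P(g(S) = c | E) H(f(S) | g(S) = c, E)`. -/
noncomputable def condEntGiven (M : HMCModel J V T) {α β : Type*} [Fintype α] [Fintype β]
    (f : (Fin T → Fin J) → α) (g : (Fin T → Fin J) → β)
    (E : (Fin T → Fin J) → (Fin T → Fin V) → Prop) : ℝ :=
  ∑ c : β, M.cpr (fun s _ => g s = c) E * M.condEnt f (fun s y => g s = c ∧ E s y)

/-- The event `X = x`. -/
def obsEq (x : Fin T → Fin V) : (Fin T → Fin J) → (Fin T → Fin V) → Prop :=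
  fun _ y => y = x

/-- The partial state vector `S_0^{t-1}` (coordinates `≥ t` are padded by `0`). -/
def prefixVar (t : ℕ) (s : Fin T → Fin J) : Fin T → Fin J :=
  fun r => if (r : ℕ) < t then s r else 0

/-- The partial state vector `S_t^{T-1}` (coordinates `< t` are padded by `0`). -/
def suffixVar (t : ℕ) (s : Fin T → Fin J) : Fin T → Fin J :=
  fun r => if t ≤ (r : ℕ) then s r else 0

end HMCModel

open HMCModel

/-! A nonnegative weight `w` on a finite type stands for the law `w / ∑ w`. Conditioning on a
value of zero weight divides by zero, which returns `0`, the same convention as `HMCModel.cpr`. -/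

namespace Weight

open Finset Real

variable {Ω α β γ : Type*} [Fintype Ω]

noncomputable def marginal [DecidableEq α] (w : Ω → ℝ) (f : Ω → α) (a : α) : ℝ :=
  ∑ s with f s = a, w s

noncomputable def entropy [Fintype α] [DecidableEq α] (w : Ω → ℝ) (f : Ω → α) : ℝ :=
  ∑ a, negMulLog (marginal w f a / ∑ s, w s)

noncomputable def condEntropy [Fintype α] [DecidableEq α] [Fintype β] [DecidableEq β]
    (w : Ω → ℝ) (f : Ω → α) (g : Ω → β) : ℝ :=
  ∑ b, marginal w g b / (∑ s, w s) *
    ∑ a, negMulLog (marginal w (fun s => (f s, g s)) (a, b) / marginal w g b)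

theorem marginal_snd [Fintype α] [Fintype β] [DecidableEq β] (u : α × β → ℝ) (b : β) :
    marginal u Prod.snd b = ∑ a, u (a, b) := by
  simp [marginal, sum_filter, Fintype.sum_prod_type]

variable [DecidableEq α] [DecidableEq β] [DecidableEq γ]

theorem marginal_nonneg {w : Ω → ℝ} (hw : ∀ s, 0 ≤ w s) (f : Ω → α) (a : α) :
    0 ≤ marginal w f a :=
  sum_nonneg fun s _ => hw s

theorem marginal_equiv [Fintype β] (w : Ω → ℝ) (e : Ω ≃ β) (b : β) :
    marginal w e b = w (e.symm b) := by
  rw [marginal, sum_filter]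
  calc _ = ∑ s, (fun b' => if b' = b then w (e.symm b') else 0) (e s) := by simp
    _ = w (e.symm b) := (e.sum_comp fun b' => if b' = b then w (e.symm b') else 0).trans (by simp)

theorem marginal_comp [Fintype β] (w : Ω → ℝ) (p : Ω → β) (f : β → α) :
    marginal w (f ∘ p) = marginal (marginal w p) f := by
  ext a
  simp only [marginal, sum_filter, ite_sum_zero]
  rw [sum_comm]
  refine sum_congr rfl fun s _ => ?_
  rw [sum_eq_single (p s) (fun b _ hb => by simp [Ne.symm hb]) (by simp)]
  simp

variable [Fintype α] [Fintype β]

theorem sum_marginal (w : Ω → ℝ) (f : Ω → α) : ∑ a, marginal w f a = ∑ s, w s :=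
  sum_fiberwise _ _ _

theorem sum_marginal_pair (w : Ω → ℝ) (f : Ω → α) (g : Ω → β) (b : β) :
    ∑ a, marginal w (fun s => (f s, g s)) (a, b) = marginal w g b := by
  rw [← marginal_snd, ← marginal_comp]
  rfl

theorem marginal_pair_comp_right (w : Ω → ℝ) (f : Ω → α) (g : Ω → β) (φ : β → γ) (a : α) (c : γ) :
    marginal w (fun s => (f s, φ (g s))) (a, c)
      = ∑ b with φ b = c, marginal w (fun s => (f s, g s)) (a, b) := by
  rw [show (fun s => (f s, φ (g s))) = Prod.map id φ ∘ fun s => (f s, g s) from rfl, marginal_comp]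
  simp [marginal, sum_filter, Fintype.sum_prod_type, ite_and]

theorem entropy_comp (w : Ω → ℝ) (p : Ω → β) (f : β → α) :
    entropy w (f ∘ p) = entropy (marginal w p) f := by
  rw [entropy, entropy, marginal_comp, sum_marginal]

theorem entropy_comp_of_injective (w : Ω → ℝ) (f : Ω → α) {e : α → β}
    (he : Function.Injective e) : entropy w (e ∘ f) = entropy w f := by
  rw [entropy_comp, ← Function.id_comp f, entropy_comp, entropy, entropy]
  refine (Fintype.sum_of_injective e he _ _ (fun b hb => ?_) fun a => ?_).symm
  · have hb : ∀ a, e a ≠ b := fun a h => hb ⟨a, h⟩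
    simp [marginal, hb]
  · simp [marginal, he.eq_iff]

theorem entropy_pair_eq_add_condEntropy {w : Ω → ℝ} (hw : ∀ s, 0 ≤ w s) (f : Ω → α)
    (g : Ω → β) : entropy w (fun s => (f s, g s)) = entropy w g + condEntropy w f g := by
  have hzero (a : α) (b : β) (hb : marginal w g b = 0) :
      marginal w (fun s => (f s, g s)) (a, b) = 0 :=
    (sum_eq_zero_iff_of_nonneg fun a _ => marginal_nonneg hw _ _).1
      ((sum_marginal_pair w f g b).trans hb) a (mem_univ a)
  have hsplit (a : α) (b : β) : marginal w (fun s => (f s, g s)) (a, b) / ∑ s, w s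
      = marginal w g b / (∑ s, w s)
        * (marginal w (fun s => (f s, g s)) (a, b) / marginal w g b) := by
    by_cases hb : marginal w g b = 0
    · simp [hb, hzero a b hb]
    · field_simp
  rw [entropy, entropy, condEntropy, Fintype.sum_prod_type_right, ← sum_add_distrib]
  refine sum_congr rfl fun b _ => ?_
  simp only [hsplit _ b, negMulLog_mul, sum_add_distrib, ← sum_mul, ← mul_sum]
  congr 1
  by_cases hb : marginal w g b = 0
  · simp [hb]
  · rw [← sum_div, sum_marginal_pair, div_self hb, one_mul]

theorem condEntropy_eq_of_marginal_pair_eq_mul {w : Ω → ℝ} {f : Ω → α} {g : Ω → β}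
    (Q : β → α → ℝ) (hQ : ∀ a b, marginal w (fun s => (f s, g s)) (a, b) = Q b a * marginal w g b) :
    condEntropy w f g = ∑ b, marginal w g b / (∑ s, w s) * ∑ a, negMulLog (Q b a) := by
  refine sum_congr rfl fun b _ => ?_
  by_cases hb : marginal w g b = 0
  · simp [hb]
  · simp only [hQ _ b, mul_div_cancel_right₀ _ hb]

variable [Fintype γ]

theorem condEntropy_comp (w : Ω → ℝ) (p : Ω → γ) (f : γ → α) (g : γ → β) :
    condEntropy w (f ∘ p) (g ∘ p) = condEntropy (marginal w p) f g := by
  have hpair := marginal_comp w p fun c => (f c, g c)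
  rw [condEntropy, condEntropy, marginal_comp, sum_marginal]
  exact congrArg _ (by ext; rw [← hpair]; rfl)

theorem condEntropy_comp_eq_of_marginal_pair_eq_mul {w : Ω → ℝ} {f : Ω → α} {g : Ω → β}
    (φ : β → γ) (Q : γ → α → ℝ)
    (hQ : ∀ a b, marginal w (fun s => (f s, g s)) (a, b) = Q (φ b) a * marginal w g b) :
    condEntropy w f (φ ∘ g) = condEntropy w f g := by
  have hQφ (a : α) (c : γ) :
      marginal w (fun s => (f s, φ (g s))) (a, c) = Q c a * marginal w (φ ∘ g) c := by
    rw [marginal_pair_comp_right, marginal_comp, marginal, mul_sum]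
    exact sum_congr rfl fun b hb => by rw [hQ, (mem_filter.1 hb).2]
  rw [condEntropy_eq_of_marginal_pair_eq_mul (g := φ ∘ g) Q hQφ,
    condEntropy_eq_of_marginal_pair_eq_mul _ hQ, marginal_comp, ← sum_fiberwise univ φ]
  refine sum_congr rfl fun c _ => ?_
  rw [marginal, sum_div, sum_mul]
  exact sum_congr rfl fun b hb => by rw [(mem_filter.1 hb).2]

section Chain

variable {σ : Type*} {n : ℕ}

noncomputable def chain (v : σ → ℝ) (A : Fin n → σ → σ → ℝ) (s : Fin (n + 1) → σ) : ℝ :=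
  v (s 0) * ∏ t : Fin n, A t (s t.castSucc) (s t.succ)

theorem chain_nonneg {v : σ → ℝ} {A : Fin n → σ → σ → ℝ} (hv : ∀ i, 0 ≤ v i)
    (hA : ∀ t i j, 0 ≤ A t i j) (s : Fin (n + 1) → σ) : 0 ≤ chain v A s :=
  mul_nonneg (hv _) (prod_nonneg fun _ _ => hA _ _ _)

theorem chain_cons (v : σ → ℝ) (A : Fin (n + 1) → σ → σ → ℝ) (a : σ) (b : Fin (n + 1) → σ) :
    chain v A (Fin.cons a b)
      = v a * A 0 a (b 0) * ∏ t : Fin n, A t.succ (b t.castSucc) (b t.succ) := by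
  simp [chain, Fin.prod_univ_succ, mul_assoc]

variable [Fintype σ] [DecidableEq σ]

theorem marginal_head_tail (w : (Fin (n + 1) → σ) → ℝ) (a : σ) (b : Fin n → σ) :
    marginal w (fun s => (s 0, Fin.tail s)) (a, b) = w (Fin.cons a b) :=
  marginal_equiv w (Fin.consEquiv fun _ => σ).symm (a, b)

theorem marginal_tail (w : (Fin (n + 1) → σ) → ℝ) (b : Fin n → σ) :
    marginal w Fin.tail b = ∑ a, w (Fin.cons a b) := by
  rw [show Fin.tail = Prod.snd ∘ fun s : Fin (n + 1) → σ => (s 0, Fin.tail s) from rfl,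
    marginal_comp, marginal_snd]
  exact sum_congr rfl fun a _ => marginal_head_tail w a b

theorem marginal_tail_chain (v : σ → ℝ) (A : Fin (n + 1) → σ → σ → ℝ) :
    marginal (chain v A) Fin.tail = chain (fun j => ∑ i, v i * A 0 i j) (fun t => A t.succ) := by
  ext b
  simp only [marginal_tail, chain_cons, ← sum_mul]
  rfl

/- Given the future `b`, the first state has law `i ↦ v i * A 0 i (b 0)` up to normalisation,
which depends on `b 0` alone. -/
theorem condEntropy_chain_zero_one_eq_tail {v : σ → ℝ} {A : Fin (n + 1) → σ → σ → ℝ}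
    (hv : ∀ i, 0 ≤ v i) (hA : ∀ t i j, 0 ≤ A t i j) :
    condEntropy (chain v A) (· 0) (· 1) = condEntropy (chain v A) (· 0) Fin.tail := by
  rw [show (fun s : Fin (n + 2) → σ => s 1) = (· 0) ∘ Fin.tail by ext; simp [Fin.tail]]
  refine condEntropy_comp_eq_of_marginal_pair_eq_mul (f := fun s : Fin (n + 2) → σ => s 0)
    (g := Fin.tail) (fun b : Fin (n + 1) → σ => b 0)
    (fun j i => v i * A 0 i j / ∑ k, v k * A 0 k j) fun a b => ?_
  rw [marginal_head_tail, marginal_tail_chain, chain_cons, chain]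
  by_cases h : ∑ k, v k * A 0 k (b 0) = 0
  · have : v a * A 0 a (b 0) = 0 :=
      (sum_eq_zero_iff_of_nonneg fun k _ => mul_nonneg (hv k) (hA 0 k _)).1 h a (mem_univ a)
    simp [this, h]
  · field_simp

theorem entropy_chain {v : σ → ℝ} {A : Fin n → σ → σ → ℝ} (hv : ∀ i, 0 ≤ v i)
    (hA : ∀ t i j, 0 ≤ A t i j) :
    entropy (chain v A) id
      = ∑ t : Fin n, condEntropy (chain v A) (· t.castSucc) (· t.succ)
        + entropy (chain v A) (· (Fin.last n)) := by
  induction n generalizing v with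
  | zero =>
    have hinj : Function.Injective fun (i : σ) (_ : Fin 1) => i := fun i j h => congrFun h 0
    have hid : (id : (Fin 1 → σ) → Fin 1 → σ) = (fun i _ => i) ∘ (· (Fin.last 0)) := by
      ext s i
      rw [Subsingleton.elim i (Fin.last 0)]
      rfl
    rw [Fin.sum_univ_zero, hid, entropy_comp_of_injective _ _ hinj]
    exact (zero_add _).symm
  | succ n ih =>
    have hv' (j : σ) : 0 ≤ ∑ i, v i * A 0 i j := sum_nonneg fun i _ => mul_nonneg (hv i) (hA 0 i j)
    have hhead : entropy (chain v A) id
        = entropy (marginal (chain v A) Fin.tail) id + condEntropy (chain v A) (· 0) (· 1) :=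
      calc entropy (chain v A) id
          = entropy (chain v A) (Fin.consEquiv (fun _ => σ) ∘ fun s => (s 0, Fin.tail s)) := by
            congr
            ext s : 1
            exact (Fin.cons_self_tail s).symm
        _ = entropy (chain v A) Fin.tail + condEntropy (chain v A) (· 0) Fin.tail := by
            rw [entropy_comp_of_injective _ _ (Fin.consEquiv _).injective,
              entropy_pair_eq_add_condEntropy (chain_nonneg hv hA)]
        _ = _ := by
            rw [condEntropy_chain_zero_one_eq_tail hv hA]
            exact congrArg (· + _) (entropy_comp _ Fin.tail id)
    have hstep (t : Fin n) : condEntropy (chain v A) (· t.succ.castSucc) (· t.succ.succ)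
        = condEntropy (marginal (chain v A) Fin.tail) (· t.castSucc) (· t.succ) :=
      condEntropy_comp _ Fin.tail (· t.castSucc) (· t.succ)
    have hlast : entropy (chain v A) (· (Fin.last (n + 1)))
        = entropy (marginal (chain v A) Fin.tail) (· (Fin.last n)) :=
      entropy_comp _ Fin.tail (· (Fin.last n))
    rw [hhead, Fin.sum_univ_succ, hlast]
    simp only [hstep]
    rw [marginal_tail_chain, ih hv' fun t => hA t.succ]
    simp only [Fin.castSucc_zero, Fin.succ_zero_eq_one]
    ring

end Chain

end Weight

namespace HMCModel

open Finset Real Weight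

variable {J V T : ℕ} [NeZero T] (M : HMCModel J V T)

theorem joint_nonneg (s : Fin T → Fin J) (y : Fin T → Fin V) : 0 ≤ M.joint s y :=
  mul_nonneg (mul_nonneg (M.init_nonneg _) (M.emit_nonneg _ _))
    (prod_nonneg fun _ _ => mul_nonneg (M.trans_nonneg _ _) (M.emit_nonneg _ _))

theorem pr_nonneg (E : (Fin T → Fin J) → (Fin T → Fin V) → Prop) : 0 ≤ M.pr E :=
  sum_nonneg fun s _ => sum_nonneg fun y _ => by
    split_ifs
    exacts [M.joint_nonneg s y, le_rfl]

theorem pr_and_obsEq (P : (Fin T → Fin J) → Prop) [DecidablePred P] (x : Fin T → Fin V) :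
    M.pr (fun s y => P s ∧ obsEq x s y) = ∑ s with P s, M.joint s x := by
  rw [pr, sum_filter]
  refine sum_congr rfl fun s _ => ?_
  by_cases h : P s <;> simp [h, obsEq]

theorem pr_obsEq (x : Fin T → Fin V) : M.pr (obsEq x) = ∑ s, M.joint s x :=
  sum_congr rfl fun _ _ => (sum_eq_single x (fun _ _ hy => if_neg hy) (by simp)).trans (if_pos rfl)

theorem joint_eq_chain {n : ℕ} (M : HMCModel J V (n + 1)) (x : Fin (n + 1) → Fin V) :
    (M.joint · x) = chain (fun j => M.init j * M.emit j (x 0))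
      fun t i j => M.trans i j * M.emit j (x t.succ) := by
  ext s
  simp [joint, chain, prod_filter, Fin.prod_univ_succ, Fin.succ_ne_zero,
    ← eq_sub_of_add_eq Fin.coeSucc_eq_succ]

theorem cpr_eq_div (A B : (Fin T → Fin J) → (Fin T → Fin V) → Prop) :
    M.cpr A B = M.pr (fun s y => A s y ∧ B s y) / M.pr B := by
  rw [cpr]
  split_ifs with h
  · rfl
  · rw [le_antisymm (not_lt.1 h) (M.pr_nonneg B), div_zero]

theorem condEnt_obsEq {α : Type*} [Fintype α] [DecidableEq α] (f : (Fin T → Fin J) → α)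
    (x : Fin T → Fin V) : M.condEnt f (obsEq x) = entropy (M.joint · x) f := by
  rw [condEnt, entropy, ← sum_neg_distrib]
  refine sum_congr rfl fun a _ => ?_
  rw [cpr_eq_div, M.pr_and_obsEq (f · = a), pr_obsEq, negMulLog, neg_mul]
  rfl

theorem condEntGiven_obsEq {α β : Type*} [Fintype α] [DecidableEq α] [Fintype β] [DecidableEq β]
    (f : (Fin T → Fin J) → α) (g : (Fin T → Fin J) → β) (x : Fin T → Fin V) :
    M.condEntGiven f g (obsEq x) = condEntropy (M.joint · x) f g := by
  rw [condEntGiven, condEntropy]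
  refine sum_congr rfl fun b _ => ?_
  rw [cpr_eq_div, M.pr_and_obsEq (g · = b), pr_obsEq, condEnt, ← sum_neg_distrib]
  congr 1
  refine sum_congr rfl fun a _ => ?_
  simp only [cpr_eq_div, ← and_assoc]
  rw [M.pr_and_obsEq (fun s => f s = a ∧ g s = b), M.pr_and_obsEq (g · = b), negMulLog, neg_mul]
  simp only [marginal, Prod.mk.injEq]

end HMCModel

theorem hmc_entropy_decomposition_future_general
    {J V T : ℕ} [NeZero T] (M : HMCModel J V T)
    (x : Fin T → Fin V) :
    M.condEnt (fun s => s) (obsEq x)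
      = (∑ t ∈ Finset.univ.filter (fun t : Fin T => (t : ℕ) < T - 1),
            M.condEntGiven (fun s => s t) (fun s => s (t + 1)) (obsEq x))
        + M.condEnt
            (fun s => s ⟨T - 1, Nat.sub_lt (Nat.pos_of_ne_zero (NeZero.ne T)) Nat.one_pos⟩)
            (obsEq x) := by
  obtain ⟨n, rfl⟩ : ∃ n, T = n + 1 := ⟨T - 1, (Nat.succ_pred_eq_of_ne_zero (NeZero.ne T)).symm⟩
  have hlast (h : n + 1 - 1 < n + 1) : (⟨n + 1 - 1, h⟩ : Fin (n + 1)) = Fin.last n :=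
    Fin.ext (Nat.add_sub_cancel n 1)
  have hsum : ∑ t ∈ Finset.univ.filter (fun t : Fin (n + 1) => (t : ℕ) < n + 1 - 1),
        M.condEntGiven (fun s => s t) (fun s => s (t + 1)) (obsEq x)
      = ∑ t : Fin n, M.condEntGiven (· t.castSucc) (· t.succ) (obsEq x) := by
    simp [Finset.sum_filter, Fin.sum_univ_castSucc, Fin.coeSucc_eq_succ]
  rw [hsum, hlast]
  simp only [condEnt_obsEq, condEntGiven_obsEq, joint_eq_chain]
  exact Weight.entropy_chain (fun j => mul_nonneg (M.init_nonneg j) (M.emit_nonneg j _))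
    fun t i j => mul_nonneg (M.trans_nonneg i j) (M.emit_nonneg j _)

/-- In a hidden Markov chain model, the conditional entropy of the
state sequence given the observed sequence decomposes additively as a sum of
entropies conditioned on the future state:
`H(S | X = x) = ∑_{t=0}^{T-2} H(S_t | S_{t+1}, X = x) + H(S_{T-1} | X = x)`. -/
theorem hmc_entropy_decomposition_future
    {J V T : ℕ} [NeZero J] [NeZero T] (M : HMCModel J V T)
    (x : Fin T → Fin V) (hx : 0 < M.pr (obsEq x)) :
    M.condEnt (fun s => s) (obsEq x)
      = (∑ t ∈ Finset.univ.filter (fun t : Fin T => (t : ℕ) < T - 1),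
            M.condEntGiven (fun s => s t) (fun s => s (t + 1)) (obsEq x))
        + M.condEnt
            (fun s => s ⟨T - 1, Nat.sub_lt (Nat.pos_of_ne_zero (NeZero.ne T)) Nat.one_pos⟩)
            (obsEq x) :=
  hmc_entropy_decomposition_future_general M x
end

section
/- In a hidden Markov tree model, the conditional entropy of a state subtree given the parent state satisfies the upward recursion: for every non-root vertex u, H(S̄_u | S_{ρ(u)}, X = x) = Σ_{v∈c(u)} H(S̄_v | S_u, X = x) + H(S_u | S_{ρ(u)}, X = x), the sum being empty when u is a leaf. -/
open HMTModel

open Real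

/-!
Write `w s = P(S = s, X = x)`. Since `S̄_u` determines `S_u`, the chain rule gives
`H(S̄_u | S_{ρ(u)}) = H(S_u | S_{ρ(u)}) + H(S̄_u | S_u, S_{ρ(u)})`. The weight `w` is a product of
local factors, one per vertex, each involving only the vertex and its parent; hence, given `S_u`,
the state trees `S̄_v` (`v ∈ c(u)`) and the states outside `S̄_u` are mutually conditionally
independent. The first independence removes `S_{ρ(u)}` from the condition, and the second splits
`H(S̄_u | S_u)` into `∑_{v ∈ c(u)} H(S̄_v | S_u)`.
-/

section FiberEntropy

variable {σ γ α β : Type*} [Fintype σ] (w : σ → ℝ)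

open Classical in
noncomputable def fiberMass (f : σ → α) (a : α) : ℝ :=
  ∑ s, if f s = a then w s else 0

/- For a weight `w ≥ 0` of total mass `Z > 0`, `fiberEntropy w f = Z * H(f) - Z * log Z`, where
`H(f)` is the Shannon entropy of `f` under the law `w / Z`; so conditional entropies are
differences of `fiberEntropy`s divided by `Z`, and the case `Z = 0` needs no separate treatment. -/
noncomputable def fiberEntropy [Fintype α] (f : σ → α) : ℝ :=
  ∑ a, negMulLog (fiberMass w f a)

theorem fiberMass_nonneg (hw : ∀ s, 0 ≤ w s) (f : σ → α) (a : α) : 0 ≤ fiberMass w f a := by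
  classical
  exact Finset.sum_nonneg fun s _ => by split_ifs <;> simp [hw s]

open Classical in
theorem fiberMass_comp [Fintype α] (f : σ → α) (φ : α → β) (b : β) :
    fiberMass w (fun s => φ (f s)) b = ∑ a, if φ a = b then fiberMass w f a else 0 := by
  simp only [fiberMass, ← Finset.sum_filter]
  rw [← Finset.sum_fiberwise_of_maps_to (t := Finset.univ.filter (φ · = b)) (g := f) (by simp)]
  refine Finset.sum_congr rfl fun a ha => ?_
  rw [Finset.filter_filter]
  refine Finset.sum_congr (Finset.filter_congr fun s _ => ?_) fun _ _ => rfl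
  simp only [Finset.mem_filter, Finset.mem_univ, true_and] at ha
  exact ⟨And.right, fun h => ⟨h ▸ ha, h⟩⟩

theorem sum_fiberMass_prod_fst [Fintype α] [Fintype β] (f : σ → α) (g : σ → β) (b : β) :
    ∑ a, fiberMass w (fun s => (f s, g s)) (a, b) = fiberMass w g b := by
  classical
  refine ((fiberMass_comp w (fun s => (f s, g s)) Prod.snd b).trans ?_).symm
  simp [Fintype.sum_prod_type]

theorem fiberEntropy_eq_sum [Fintype α] (f : σ → α) :
    fiberEntropy w f = ∑ s, -(w s * log (fiberMass w f (f s))) := by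
  classical
  simp only [fiberEntropy, negMulLog, fiberMass, ← Finset.sum_filter]
  rw [← Finset.sum_fiberwise (g := f)]
  refine Finset.sum_congr rfl fun a _ => ?_
  rw [neg_mul, Finset.sum_mul, ← Finset.sum_neg_distrib]
  refine Finset.sum_congr rfl fun s hs => ?_
  rw [(Finset.mem_filter.mp hs).2]

theorem fiberEntropy_congr [Fintype α] [Fintype β] {f : σ → α} {g : σ → β}
    (h : ∀ s s', f s = f s' ↔ g s = g s') : fiberEntropy w f = fiberEntropy w g := by
  classical
  simp only [fiberEntropy_eq_sum, fiberMass, h]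

def FiberCondIndep (C : σ → γ) (A : σ → α) (B : σ → β) : Prop :=
  ∃ (G : γ → α → ℝ) (H : γ → β → ℝ),
    ∀ c a b, fiberMass w (fun s => (C s, A s, B s)) (c, a, b) = G c a * H c b

namespace FiberCondIndep

variable {w} {C : σ → γ} {A : σ → α} {B : σ → β}

theorem comp_right [Fintype γ] [Fintype α] [Fintype β] {β' : Type*}
    (h : FiberCondIndep w C A B) (g : β → β') :
    FiberCondIndep w C A (fun s => g (B s)) := by
  classical
  obtain ⟨G, H, hGH⟩ := h
  refine ⟨G, fun c b' => ∑ b, if g b = b' then H c b else 0, fun c a b' => ?_⟩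
  rw [fiberMass_comp w (fun s => (C s, A s, B s)) (fun p => (p.1, p.2.1, g p.2.2)),
    Finset.mul_sum]
  simp [Fintype.sum_prod_type, hGH, ite_and]

theorem fiberEntropy_add [Fintype γ] [Fintype α] [Fintype β] (h : FiberCondIndep w C A B) :
    fiberEntropy w (fun s => (C s, A s, B s)) + fiberEntropy w C
      = fiberEntropy w (fun s => (C s, A s)) + fiberEntropy w (fun s => (C s, B s)) := by
  classical
  obtain ⟨G, H, hGH⟩ := h
  have hCA : ∀ c a, fiberMass w (fun s => (C s, A s)) (c, a) = G c a * ∑ b, H c b := fun c a =>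
    (fiberMass_comp w (fun s => (C s, A s, B s)) (fun p => (p.1, p.2.1)) (c, a)).trans
      (by simp [Fintype.sum_prod_type, hGH, ite_and, Finset.mul_sum])
  have hCB : ∀ c b, fiberMass w (fun s => (C s, B s)) (c, b) = (∑ a, G c a) * H c b := fun c b =>
    (fiberMass_comp w (fun s => (C s, A s, B s)) (fun p => (p.1, p.2.2)) (c, b)).trans
      (by simp [Fintype.sum_prod_type, hGH, ite_and, Finset.sum_mul])
  have hC : ∀ c, fiberMass w C c = (∑ a, G c a) * ∑ b, H c b := fun c =>
    (fiberMass_comp w (fun s => (C s, A s, B s)) (fun p => p.1) c).trans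
      (by simp [Fintype.sum_prod_type, hGH, Finset.sum_mul_sum])
  simp only [fiberEntropy, Fintype.sum_prod_type, hGH, hCA, hCB, hC, ← Finset.sum_add_distrib]
  refine Finset.sum_congr rfl fun c _ => ?_
  simp only [negMulLog_mul, Finset.sum_add_distrib, ← Finset.sum_mul, ← Finset.mul_sum]
  ring

/- A fibre of `(C, A, B)` has at most one point, and by gluing it is nonempty as soon as the
corresponding fibres of `(C, A)` and `(C, B)` are. -/
theorem of_glue {φ : γ → α → ℝ} {ψ : γ → β → ℝ}
    (hw : ∀ s, w s = φ (C s) (A s) * ψ (C s) (B s))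
    (hinj : ∀ s s', C s = C s' → A s = A s' → B s = B s' → s = s')
    (hglue : ∀ s s', C s = C s' → ∃ t, C t = C s ∧ A t = A s ∧ B t = B s') :
    FiberCondIndep w C A B := by
  classical
  refine ⟨fun c a => if ∃ s, C s = c ∧ A s = a then φ c a else 0,
    fun c b => if ∃ s, C s = c ∧ B s = b then ψ c b else 0, fun c a b => ?_⟩
  beta_reduce
  by_cases hfib : ∃ s, C s = c ∧ A s = a ∧ B s = b
  · obtain ⟨s₀, rfl, rfl, rfl⟩ := hfib
    rw [fiberMass, Finset.sum_eq_single s₀, if_pos rfl, if_pos ⟨s₀, rfl, rfl⟩,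
      if_pos ⟨s₀, rfl, rfl⟩, hw]
    · intro s _ hs
      simp only [Prod.mk.injEq]
      exact if_neg fun ⟨hC, hA, hB⟩ => hs (hinj s s₀ hC hA hB)
    · simp
  · have hzero : fiberMass w (fun s => (C s, A s, B s)) (c, a, b) = 0 :=
      Finset.sum_eq_zero fun s _ => if_neg fun he => hfib ⟨s, by simpa using he⟩
    rw [hzero]
    split_ifs with hA hB
    · obtain ⟨s, rfl, rfl⟩ := hA
      obtain ⟨s', hC, rfl⟩ := hB
      obtain ⟨t, htC, htA, htB⟩ := hglue s s' hC.symm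
      exact (hfib ⟨t, htC, htA, htB⟩).elim
    all_goals simp

end FiberCondIndep

end FiberEntropy

theorem mul_sum_negMulLog_div {ι : Type*} [Fintype ι] {p : ι → ℝ} {q : ℝ} (hp : ∀ i, 0 ≤ p i)
    (hq : ∑ i, p i = q) : q * ∑ i, negMulLog (p i / q) = ∑ i, negMulLog (p i) - negMulLog q := by
  rcases eq_or_ne q 0 with rfl | hq₀
  · simp [(Finset.sum_eq_zero_iff_of_nonneg fun i _ => hp i).mp hq]
  have hterm : ∀ i, q * negMulLog (p i / q) = negMulLog (p i) + p i * log q := fun i => by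
    rw [div_eq_mul_inv, negMulLog_mul, negMulLog, negMulLog, log_inv]
    field_simp
  rw [Finset.mul_sum, Finset.sum_congr rfl fun i _ => hterm i, Finset.sum_add_distrib,
    ← Finset.sum_mul, hq, negMulLog]
  ring

namespace HMTModel

variable {J V n : ℕ} [NeZero n] (M : HMTModel J V n)

theorem joint_nonneg (s : Fin n → Fin J) (x : Fin n → Fin V) : 0 ≤ M.joint s x :=
  mul_nonneg (mul_nonneg (M.init_nonneg _) (Finset.prod_nonneg fun _ _ => M.trans_nonneg _ _))
    (Finset.prod_nonneg fun _ _ => M.emit_nonneg _ _)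

theorem pr_nonneg (E : (Fin n → Fin J) → (Fin n → Fin V) → Prop) : 0 ≤ M.pr E :=
  Finset.sum_nonneg fun s _ => Finset.sum_nonneg fun y _ => by
    split_ifs
    exacts [M.joint_nonneg s y, le_rfl]

theorem cpr_eq_div (A B : (Fin n → Fin J) → (Fin n → Fin V) → Prop) :
    M.cpr A B = M.pr (fun s y => A s y ∧ B s y) / M.pr B := by
  rw [cpr]
  split_ifs with hB
  · rfl
  · rw [le_antisymm (not_lt.mp hB) (M.pr_nonneg B), div_zero]

open Classical in
theorem pr_eq_sum_joint {x : Fin n → Fin V} {E : (Fin n → Fin J) → (Fin n → Fin V) → Prop}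
    (hE : ∀ s y, E s y → y = x) : M.pr E = ∑ s, if E s x then M.joint s x else 0 :=
  Finset.sum_congr rfl fun s _ =>
    Finset.sum_eq_single x (fun y _ hy => if_neg fun h => hy (hE s y h)) (by simp)

theorem condEntGiven_obsEq {α β : Type*} [Fintype α] [Fintype β] (x : Fin n → Fin V)
    (f : (Fin n → Fin J) → α) (g : (Fin n → Fin J) → β) :
    M.condEntGiven f g (obsEq x)
      = (fiberEntropy (M.joint · x) (fun s => (f s, g s)) - fiberEntropy (M.joint · x) g)
          / M.pr (obsEq x) := by
  classical
  set w : (Fin n → Fin J) → ℝ := (M.joint · x)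
  have hg : ∀ c, M.pr (fun s y => g s = c ∧ obsEq x s y) = fiberMass w g c := fun c => by
    rw [M.pr_eq_sum_joint fun s y h => h.2]
    exact Finset.sum_congr rfl fun s _ => by simp only [obsEq, and_true, w]
  have hfg : ∀ a c, M.pr (fun s y => f s = a ∧ g s = c ∧ obsEq x s y)
      = fiberMass w (fun s => (f s, g s)) (a, c) := fun a c => by
    rw [M.pr_eq_sum_joint fun s y h => h.2.2]
    exact Finset.sum_congr rfl fun s _ => by simp only [obsEq, and_true, Prod.mk.injEq, w]
  have hterm : ∀ c, fiberMass w g c / M.pr (obsEq x) *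
      -∑ a, fiberMass w (fun s => (f s, g s)) (a, c) / fiberMass w g c *
        log (fiberMass w (fun s => (f s, g s)) (a, c) / fiberMass w g c)
      = (∑ a, negMulLog (fiberMass w (fun s => (f s, g s)) (a, c))
          - negMulLog (fiberMass w g c)) / M.pr (obsEq x) := fun c => by
    rw [← mul_sum_negMulLog_div (fun a => fiberMass_nonneg w (M.joint_nonneg · x) _ _)
      (sum_fiberMass_prod_fst w f g c), div_mul_eq_mul_div]
    simp only [negMulLog, neg_mul, Finset.sum_neg_distrib]
  simp only [condEntGiven, condEnt, cpr_eq_div, hg, hfg, hterm]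
  rw [← Finset.sum_div, Finset.sum_sub_distrib, fiberEntropy, fiberEntropy, Fintype.sum_prod_type,
    Finset.sum_comm]

def children (u : Fin n) : Finset (Fin n) :=
  Finset.univ.filter (fun v : Fin n => v ≠ 0 ∧ M.parent v = u)

open Classical in
noncomputable def subtree (u : Fin n) : Finset (Fin n) :=
  Finset.univ.filter (M.inSubtree u)

def localFactor (x : Fin n → Fin V) (s : Fin n → Fin J) (v : Fin n) : ℝ :=
  (if v = 0 then M.init (s 0) else M.trans (s (M.parent v)) (s v)) * M.emit (s v) (x v)

theorem joint_eq_prod_localFactor (s : Fin n → Fin J) (x : Fin n → Fin V) :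
    M.joint s x = ∏ v, M.localFactor x s v := by
  simp only [localFactor, Finset.prod_mul_distrib, Finset.prod_ite, joint, Finset.filter_eq',
    Finset.mem_univ, if_true, Finset.prod_singleton]

variable {M}

theorem mem_children {u v : Fin n} : v ∈ M.children u ↔ v ≠ 0 ∧ M.parent v = u := by
  simp [children]

theorem mem_subtree {u v : Fin n} : v ∈ M.subtree u ↔ M.inSubtree u v := by
  simp [subtree]

theorem le_of_inSubtree {u v : Fin n} (h : M.inSubtree u v) : u ≤ v := by
  induction h with
  | refl => exact le_rfl
  | tail _ hbc ih => exact (hbc.2 ▸ M.parent_lt _ hbc.1).le.trans ih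

theorem lt_of_mem_children {u v : Fin n} (hv : v ∈ M.children u) : u < v := by
  obtain ⟨hv₀, rfl⟩ := mem_children.mp hv
  exact M.parent_lt v hv₀

theorem inSubtree_of_inSubtree_parent {u v : Fin n} (hv : v ≠ 0)
    (h : M.inSubtree u (M.parent v)) : M.inSubtree u v :=
  Relation.ReflTransGen.head ⟨hv, rfl⟩ h

theorem inSubtree_parent_of_ne {u v : Fin n} (h : M.inSubtree u v) (hne : v ≠ u) :
    v ≠ 0 ∧ M.inSubtree u (M.parent v) := by
  rcases Relation.ReflTransGen.cases_head h with rfl | ⟨b, ⟨hv₀, rfl⟩, hb⟩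
  exacts [absurd rfl hne, ⟨hv₀, hb⟩]

theorem inSubtree_of_mem_children {u v w : Fin n} (hv : v ∈ M.children u)
    (h : M.inSubtree v w) : M.inSubtree u w :=
  Relation.ReflTransGen.tail h (mem_children.mp hv)

theorem notMem_subtree_of_lt {u v : Fin n} (h : v < u) : v ∉ M.subtree u := fun hv =>
  (le_of_inSubtree (mem_subtree.mp hv)).not_gt h

theorem subtree_eq_insert_biUnion (u : Fin n) :
    M.subtree u = insert u ((M.children u).biUnion M.subtree) := by
  ext w
  simp only [Finset.mem_insert, Finset.mem_biUnion, mem_subtree]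
  constructor
  · intro h
    rcases Relation.ReflTransGen.cases_tail h with rfl | ⟨v, hwv, hvu⟩
    exacts [Or.inl rfl, Or.inr ⟨v, mem_children.mpr hvu, hwv⟩]
  · rintro (rfl | ⟨v, hv, hw⟩)
    exacts [Relation.ReflTransGen.refl, inSubtree_of_mem_children hv hw]

theorem eq_of_inSubtree_of_mem_children {u v v' : Fin n} (hv : v ∈ M.children u)
    (hv' : v' ∈ M.children u) (h : M.inSubtree v' v) : v = v' := by
  by_contra hne
  have hu : M.inSubtree v' u := (mem_children.mp hv).2 ▸ (inSubtree_parent_of_ne h hne).2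
  exact (le_of_inSubtree hu).not_gt (lt_of_mem_children hv')

theorem disjoint_subtree_of_mem_children {u v v' : Fin n} (hv : v ∈ M.children u)
    (hv' : v' ∈ M.children u) (hne : v ≠ v') : Disjoint (M.subtree v) (M.subtree v') := by
  refine Finset.disjoint_left.mpr fun w hw hw' => hne ?_
  have hunique : Relator.RightUnique (fun a b : Fin n => a ≠ 0 ∧ M.parent a = b) :=
    fun _ _ _ hab hac => hab.2.symm.trans hac.2
  rcases Relation.ReflTransGen.total_of_right_unique hunique (mem_subtree.mp hw)
    (mem_subtree.mp hw') with h | h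
  exacts [eq_of_inSubtree_of_mem_children hv hv' h,
    (eq_of_inSubtree_of_mem_children hv' hv h).symm]

theorem localFactor_congr {x : Fin n → Fin V} {s s' : Fin n → Fin J} {v : Fin n}
    (hv : s v = s' v) (hpar : v ≠ 0 → s (M.parent v) = s' (M.parent v)) :
    M.localFactor x s v = M.localFactor x s' v := by
  unfold localFactor
  split_ifs with h
  · subst h; rw [hv]
  · rw [hv, hpar h]

section memVar

variable [NeZero J]

theorem memVar_apply (A : Finset (Fin n)) (s : Fin n → Fin J) (v : Fin n) :
    M.memVar A s v = if v ∈ A then s v else 0 := rfl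

theorem memVar_eq_memVar_iff {A : Finset (Fin n)} {s s' : Fin n → Fin J} :
    M.memVar A s = M.memVar A s' ↔ ∀ v ∈ A, s v = s' v := by
  simp only [funext_iff, memVar_apply]
  refine forall_congr' fun v => ?_
  by_cases hv : v ∈ A <;> simp [hv]

theorem memVar_memVar_of_subset {A B : Finset (Fin n)} (h : A ⊆ B) (s : Fin n → Fin J) :
    M.memVar A (M.memVar B s) = M.memVar A s := by
  funext v
  by_cases hv : v ∈ A
  · simp [memVar_apply, hv, h hv]
  · simp [memVar_apply, hv]

open Classical in
theorem subVar_eq_memVar (u : Fin n) : M.subVar u = M.memVar (M.subtree u) := by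
  funext s v
  simp [subVar, memVar_apply, mem_subtree]

/- Markov property: the local factors at vertices of `A` only see `A ∪ {u}`, all other local
factors only see `Aᶜ`, so `u` separates `A` from the rest of the tree. -/
theorem fiberCondIndep_memVar_compl (x : Fin n → Fin V) {u : Fin n} {A : Finset (Fin n)}
    (huA : u ∉ A) (hin : ∀ v ∈ A, v ≠ 0 → M.parent v ∈ insert u A)
    (hout : ∀ v ∉ A, v ≠ 0 → M.parent v ∉ A) :
    FiberCondIndep (M.joint · x) (fun s => s u) (M.memVar A) (M.memVar Aᶜ) := by
  classical
  refine FiberCondIndep.of_glue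
    (φ := fun c a => ∏ v ∈ A, M.localFactor x (Function.update a u c) v)
    (ψ := fun _ b => ∏ v ∈ Aᶜ, M.localFactor x b v) (fun s => ?_) (fun s s' _ hA hB => ?_)
    (fun s s' hu => ⟨fun v => if v ∈ A then s v else s' v, ?_, ?_, ?_⟩)
  · rw [joint_eq_prod_localFactor, ← Finset.prod_mul_prod_compl A]
    congr 1
    · refine Finset.prod_congr rfl fun v hv => localFactor_congr ?_ fun hv₀ => ?_
      · rw [Function.update_of_ne (ne_of_mem_of_not_mem hv huA), memVar_apply, if_pos hv]
      · rcases Finset.mem_insert.mp (hin v hv hv₀) with h | h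
        · rw [h, Function.update_self]
        · rw [Function.update_of_ne (ne_of_mem_of_not_mem h huA), memVar_apply, if_pos h]
    · refine Finset.prod_congr rfl fun v hv => localFactor_congr ?_ fun hv₀ => ?_
      · rw [memVar_apply, if_pos hv]
      · rw [memVar_apply, if_pos (Finset.mem_compl.mpr (hout v (Finset.mem_compl.mp hv) hv₀))]
  · funext v
    by_cases hv : v ∈ A
    · simpa [memVar_apply, hv] using congrFun hA v
    · simpa [memVar_apply, hv] using congrFun hB v
  · simp [huA, hu]
  all_goals funext v; by_cases hv : v ∈ A <;> simp [memVar_apply, hv]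

theorem fiberCondIndep_biUnion_subtree (x : Fin n → Fin V) {u : Fin n}
    {T : Finset (Fin n)} (hT : T ⊆ M.children u) :
    FiberCondIndep (M.joint · x) (fun s => s u) (M.memVar (T.biUnion M.subtree))
      (M.memVar (T.biUnion M.subtree)ᶜ) := by
  refine fiberCondIndep_memVar_compl x ?_ (fun w hw hw₀ => ?_) (fun w hw hw₀ hpw => hw ?_)
  · simp only [Finset.mem_biUnion, not_exists, not_and]
    exact fun v hv => notMem_subtree_of_lt (lt_of_mem_children (hT hv))
  · obtain ⟨v, hv, hwv⟩ := Finset.mem_biUnion.mp hw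
    by_cases hwv' : w = v
    · subst hwv'
      rw [(mem_children.mp (hT hv)).2]
      exact Finset.mem_insert_self _ _
    · exact Finset.mem_insert_of_mem (Finset.mem_biUnion.mpr
        ⟨v, hv, mem_subtree.mpr (inSubtree_parent_of_ne (mem_subtree.mp hwv) hwv').2⟩)
  · obtain ⟨v, hv, hpv⟩ := Finset.mem_biUnion.mp hpw
    exact Finset.mem_biUnion.mpr
      ⟨v, hv, mem_subtree.mpr (inSubtree_of_inSubtree_parent hw₀ (mem_subtree.mp hpv))⟩

theorem fiberEntropy_biUnion_subtree_sub_eq_sum (x : Fin n → Fin V) {u : Fin n}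
    {T : Finset (Fin n)} (hT : T ⊆ M.children u) :
    fiberEntropy (M.joint · x) (fun s => (s u, M.memVar (T.biUnion M.subtree) s))
        - fiberEntropy (M.joint · x) (fun s => s u)
      = ∑ v ∈ T, (fiberEntropy (M.joint · x) (fun s => (M.subVar v s, s u))
          - fiberEntropy (M.joint · x) (fun s => s u)) := by
  induction T using Finset.induction_on with
  | empty =>
    rw [Finset.sum_empty, sub_eq_zero]
    exact fiberEntropy_congr _ fun s s' => by simp [memVar_eq_memVar_iff]
  | insert v T hvT ih =>
    have hv : v ∈ M.children u := hT (Finset.mem_insert_self v T)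
    have hT' : T ⊆ M.children u := (Finset.subset_insert v T).trans hT
    have hsub : T.biUnion M.subtree ⊆ (M.subtree v)ᶜ := fun w hw => by
      obtain ⟨v', hv', hwv'⟩ := Finset.mem_biUnion.mp hw
      exact Finset.mem_compl.mpr (Finset.disjoint_right.mp (disjoint_subtree_of_mem_children hv
        (hT' hv') (ne_of_mem_of_not_mem hv' hvT).symm) hwv')
    have hci := (fiberCondIndep_biUnion_subtree x (Finset.singleton_subset_iff.mpr hv)).comp_right
      (M.memVar (T.biUnion M.subtree))
    simp only [Finset.singleton_biUnion, memVar_memVar_of_subset hsub] at hci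
    have hsplit := hci.fiberEntropy_add
    have hinsert : fiberEntropy (M.joint · x)
        (fun s => (s u, M.memVar ((insert v T).biUnion M.subtree) s))
        = fiberEntropy (M.joint · x)
          (fun s => (s u, M.memVar (M.subtree v) s, M.memVar (T.biUnion M.subtree) s)) :=
      fiberEntropy_congr _ fun s s' => by
        simp only [Prod.mk.injEq, memVar_eq_memVar_iff, Finset.biUnion_insert,
          Finset.forall_mem_union]
    have hswap : fiberEntropy (M.joint · x) (fun s => (M.subVar v s, s u))
        = fiberEntropy (M.joint · x) (fun s => (s u, M.memVar (M.subtree v) s)) :=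
      fiberEntropy_congr _ fun s s' => by simp [subVar_eq_memVar, and_comm]
    rw [Finset.sum_insert hvT, ← ih hT', hinsert, hswap]
    linarith

variable (M) in
theorem fiberEntropy_subVar_parent_add_eq (x : Fin n → Fin V) {u : Fin n} (hu : u ≠ 0) :
    fiberEntropy (M.joint · x) (fun s => (M.subVar u s, s (M.parent u)))
        + fiberEntropy (M.joint · x) (fun s => s u)
      = fiberEntropy (M.joint · x)
          (fun s => (s u, M.memVar ((M.children u).biUnion M.subtree) s))
        + fiberEntropy (M.joint · x) (fun s => (s u, s (M.parent u))) := by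
  have hparent : M.parent u ∉ (M.children u).biUnion M.subtree := fun h =>
    notMem_subtree_of_lt (M.parent_lt u hu)
      ((subtree_eq_insert_biUnion u).symm ▸ Finset.mem_insert_of_mem h)
  have hci := (fiberCondIndep_biUnion_subtree x (subset_refl (M.children u))).comp_right
    (· (M.parent u))
  simp only [memVar_apply, Finset.mem_compl, hparent, not_false_eq_true, if_true] at hci
  rw [← hci.fiberEntropy_add]
  congr 1
  refine fiberEntropy_congr _ fun s s' => ?_
  rw [subVar_eq_memVar, subtree_eq_insert_biUnion]
  simp only [Prod.mk.injEq, memVar_eq_memVar_iff, Finset.forall_mem_insert, and_assoc]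

end memVar

end HMTModel

theorem hmt_subtree_entropy_upward_recursion_general
    {J V n : ℕ} [NeZero J] [NeZero n] (M : HMTModel J V n)
    (x : Fin n → Fin V)
    (u : Fin n) (hu : u ≠ 0) :
    M.condEntGiven (M.subVar u) (fun s => s (M.parent u)) (obsEq x)
      = (∑ v ∈ Finset.univ.filter (fun v : Fin n => v ≠ 0 ∧ M.parent v = u),
            M.condEntGiven (M.subVar v) (fun s => s u) (obsEq x))
        + M.condEntGiven (fun s => s u) (fun s => s (M.parent u)) (obsEq x) := by
  simp only [condEntGiven_obsEq]
  rw [← Finset.sum_div, ← add_div]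
  congr 1
  have hparent := M.fiberEntropy_subVar_parent_add_eq x hu
  have hchildren := fiberEntropy_biUnion_subtree_sub_eq_sum x (subset_refl (M.children u))
  rw [children] at hparent hchildren
  linarith

/-- In a hidden Markov tree model, the conditional entropy of a
state subtree given the parent state satisfies the upward recursion: for every
non-root vertex `u`,
`H(S̄_u | S_{ρ(u)}, X = x) = ∑_{v∈c(u)} H(S̄_v | S_u, X = x) + H(S_u | S_{ρ(u)}, X = x)`,
the sum being empty when `u` is a leaf. -/
theorem hmt_subtree_entropy_upward_recursion
    {J V n : ℕ} [NeZero J] [NeZero n] (M : HMTModel J V n)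
    (x : Fin n → Fin V) (hx : 0 < M.pr (obsEq x))
    (u : Fin n) (hu : u ≠ 0) :
    M.condEntGiven (M.subVar u) (fun s => s (M.parent u)) (obsEq x)
      = (∑ v ∈ Finset.univ.filter (fun v : Fin n => v ≠ 0 ∧ M.parent v = u),
            M.condEntGiven (M.subVar v) (fun s => s u) (obsEq x))
        + M.condEntGiven (fun s => s u) (fun s => s (M.parent u)) (obsEq x) :=
  hmt_subtree_entropy_upward_recursion_general M x u hu
end
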